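/- Let W be an n×n matrix with real entries, and let d(U) := ‖U − W‖ be the Frobenius distance. If U = Sₘ^{αₘ}···S₁^{α₁} is a product of powers of real symmetric involutions (each Sⱼ^α := e^{-iπα/2}(cos(πα/2)I + i sin(πα/2)Sⱼ)), then d(Sₘ^{2−αₘ}···S₁^{2−α₁}) = d(Sₘ^{αₘ}···S₁^{α₁}). -/
import Mathlib

open Matrix Complex Real

attribute [local instance] Matrix.frobeniusNormedAddCommGroup

/-- The gate `S^α := e^{-iπα/2}(cos(πα/2)·I + i·sin(πα/2)·S)`. -/
noncomputable def swapPow {n : ℕ} (S : Matrix (Fin n) (Fin n) ℂ) (α : ℝ) :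
    Matrix (Fin n) (Fin n) ℂ :=
  Complex.exp (-Complex.I * ((π * α / 2 : ℝ) : ℂ)) •
    (((Real.cos (π * α / 2) : ℂ)) • (1 : Matrix (Fin n) (Fin n) ℂ) +
      (Complex.I * (Real.sin (π * α / 2) : ℂ)) • S)

lemma conj_swapPow {n : ℕ} (S : Matrix (Fin n) (Fin n) ℂ)
    (hreal : ∀ i j, (S i j).im = 0) (α : ℝ) :
    swapPow S (2 - α) = (swapPow S α).map (starRingEnd ℂ) := by
  ext i j
  have hS : (starRingEnd ℂ) (S i j) = S i j := Complex.conj_eq_iff_im.mpr (hreal i j)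
  have h1 : π * (2 - α) / 2 = π - π * α / 2 := by ring
  have hone : (starRingEnd ℂ) ((1 : Matrix (Fin n) (Fin n) ℂ) i j)
      = (1 : Matrix (Fin n) (Fin n) ℂ) i j := by
    simp [Matrix.one_apply, apply_ite (starRingEnd ℂ)]
  simp only [swapPow, Matrix.map_apply, Matrix.smul_apply, Matrix.add_apply,
    smul_eq_mul, _root_.map_mul, _root_.map_add, ← Complex.exp_conj, map_neg, Complex.conj_I,
    Complex.conj_ofReal, hS, hone, h1, Real.cos_pi_sub, Real.sin_pi_sub]
  have h2 : -Complex.I * ((π - π * α / 2 : ℝ) : ℂ)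
      = -((π : ℂ) * Complex.I) + --
        (- -Complex.I) * ((π * α / 2 : ℝ) : ℂ) := by
    push_cast; ring
  rw [h2, Complex.exp_add, Complex.exp_neg, Complex.exp_pi_mul_I]
  push_cast
  ring

lemma map_real_eq {n : ℕ} (W : Matrix (Fin n) (Fin n) ℂ) (hW : ∀ i j, (W i j).im = 0) :
    W.map (starRingEnd ℂ) = W := by
  ext i j
  exact Complex.conj_eq_iff_im.mpr (hW i j)

lemma norm_map_conj {n : ℕ} (A : Matrix (Fin n) (Fin n) ℂ) :
    ‖A.map (starRingEnd ℂ)‖ = ‖A‖ := by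
  have : A.map (starRingEnd ℂ) = Aᴴᵀ := by
    ext i j; simp [Matrix.conjTranspose_apply]
  rw [this, Matrix.frobenius_norm_transpose, Matrix.frobenius_norm_conjTranspose]

/-- Replacing each exponent `α` by `2 − α` in a product of SWAP-type gates gives a matrix
equally distant (in Frobenius norm) from any real target gate `W`. -/
theorem stmt_13 {n m : ℕ} (S : Fin m → Matrix (Fin n) (Fin n) ℂ)
    (hreal : ∀ k i j, (S k i j).im = 0)
    (hsymm : ∀ k, (S k)ᵀ = S k)
    (hinv : ∀ k, S k * S k = 1)
    (α : Fin m → ℝ)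
    (W : Matrix (Fin n) (Fin n) ℂ) (hW : ∀ i j, (W i j).im = 0) :
    ‖(List.ofFn fun j => swapPow (S j) (2 - α j)).reverse.prod - W‖ =
      ‖(List.ofFn fun j => swapPow (S j) (α j)).reverse.prod - W‖ := by
  set f : Matrix (Fin n) (Fin n) ℂ →+* Matrix (Fin n) (Fin n) ℂ :=
    (starRingEnd ℂ).mapMatrix with hf
  have hlist : (List.ofFn fun j => swapPow (S j) (2 - α j))
      = (List.ofFn fun j => swapPow (S j) (α j)).map f := by
    rw [List.map_ofFn]
    congr 1
    funext j
    exact conj_swapPow (S j) (hreal j) (α j)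
  rw [hlist, ← List.map_reverse, ← map_list_prod]
  set U := (List.ofFn fun j => swapPow (S j) (α j)).reverse.prod
  have hfW : f W = W := by
    rw [hf, RingHom.mapMatrix_apply]; exact map_real_eq W hW
  have key : (U - W).map (starRingEnd ℂ) = f U - W := by
    rw [← RingHom.mapMatrix_apply, ← hf, map_sub, hfW]
  rw [← key, norm_map_conj]
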